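/- arXiv:2008.03227 — 2 statements merged into one kernel-verified Lean document; each statement's English description precedes it below -/
import Mathlib

section
/- Let φ ∈ C¹(ℝ²,ℝ³) satisfy φ(z)·ω(z) = 0 for every z ∈ ℝ². Then at every point of ℝ² one has ∂ₓφ∧∂_yω + ∂ₓω∧∂_yφ = −μ²φ − (∂ₓφ·∂ₓω + ∂_yφ·∂_yω)·ω. -/
open MeasureTheory Real Filter Topology

noncomputable section

abbrev R2 := ℝ × ℝ
abbrev V3 := Fin 3 → ℝ

/-- Partial derivative in the `x` direction. -/
def pdx {E : Type*} [NormedAddCommGroup E] [NormedSpace ℝ E] (f : R2 → E) (z : R2) : E :=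
  fderiv ℝ f z (1, 0)

/-- Partial derivative in the `y` direction. -/
def pdy {E : Type*} [NormedAddCommGroup E] [NormedSpace ℝ E] (f : R2 → E) (z : R2) : E :=
  fderiv ℝ f z (0, 1)

/-- Euclidean scalar product on `ℝ³`. -/
def dot3 (a b : V3) : ℝ := a 0 * b 0 + a 1 * b 1 + a 2 * b 2

/-- Cross product on `ℝ³`. -/
def cross3 (a b : V3) : V3 :=
  ![a 1 * b 2 - a 2 * b 1, a 2 * b 0 - a 0 * b 2, a 0 * b 1 - a 1 * b 0]

def e1 : V3 := ![1, 0, 0]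
def e2 : V3 := ![0, 1, 0]
def e3 : V3 := ![0, 0, 1]

/-- The conformal factor `μ(z) = 2/(1+|z|²)`. -/
def mu (z : R2) : ℝ := 2 / (1 + z.1 ^ 2 + z.2 ^ 2)

/-- Inverse stereographic projection `ω(z) = (μ x, μ y, 1 − μ)`. -/
def sphOmega (z : R2) : V3 := ![mu z * z.1, mu z * z.2, 1 - mu z]

/-- The conjugate inversion `z ↦ (x,−y)/(x²+y²)`. -/
def invz (z : R2) : R2 := (z.1 / (z.1 ^ 2 + z.2 ^ 2), -z.2 / (z.1 ^ 2 + z.2 ^ 2))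

/-- `u` is of class `C^m(ℝ̄²)`: it is `C^m` on `ℝ²` and `z ↦ u((x,−y)/(x²+y²))`
extends to a `C^m` function on all of `ℝ²`. -/
def CmBar (m : ℕ) {E : Type*} [NormedAddCommGroup E] [NormedSpace ℝ E] (u : R2 → E) : Prop :=
  ContDiff ℝ m u ∧ ∃ v : R2 → E, ContDiff ℝ m v ∧ ∀ z : R2, z ≠ 0 → v z = u (invz z)

/-- `∇f·∇g` for scalar functions. -/
def gdot (f g : R2 → ℝ) (z : R2) : ℝ := pdx f z * pdx g z + pdy f z * pdy g z

/-- `div(a ∇f)` for scalar functions. -/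
def divg (a f : R2 → ℝ) (z : R2) : ℝ :=
  pdx (fun w => a w * pdx f w) z + pdy (fun w => a w * pdy f w) z

/-- `|∇u|² = Σ_j |∇u_j|²`. -/
def gradNormSq (u : R2 → V3) (z : R2) : ℝ := ∑ j, ((pdx u z j) ^ 2 + (pdy u z j) ^ 2)

/-- Componentwise Laplacian. -/
def lapv (u : R2 → V3) (z : R2) : V3 := pdx (pdx u) z + pdy (pdy u) z

/-- `J_K(u) := −div(u₃^{−2}∇u) − u₃^{−3}|∇u|²e₃ + 2·K(u)·u₃^{−3}·∂ₓu∧∂_yu`. -/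
def JK (K : V3 → ℝ) (u : R2 → V3) (z : R2) : V3 := fun l =>
  -divg (fun w => ((u w 2) ^ 2)⁻¹) (fun w => u w l) z
    - ((u z 2) ^ 3)⁻¹ * gradNormSq u z * e3 l
    + 2 * K (u z) * ((u z 2) ^ 3)⁻¹ * cross3 (pdx u z) (pdy u z) l

/-- `J₀'(U)φ`: the pointwise derivative at `t = 0` of `t ↦ J₀(U + tφ)`. -/
def J0lin (k : ℝ) (U φ : R2 → V3) (z : R2) : V3 :=
  deriv (fun t : ℝ => JK (fun _ => k) (fun w => U w + t • φ w) z) 0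

def rk (k : ℝ) : ℝ := (Real.sqrt (k ^ 2 - 1))⁻¹

/-- `𝒰 = r_k(ω + k e₃)`. -/
def Uk (k : ℝ) (z : R2) : V3 := rk k • (sphOmega z + k • e3)

/-- `iz∇u := −y ∂ₓu + x ∂_yu`. -/
def izgrad (u : R2 → V3) (z : R2) : V3 := (-z.2) • pdx u z + z.1 • pdy u z

/-- Pointwise projection orthogonal to `ω`. -/
def Pproj (f : R2 → V3) (z : R2) : V3 := f z - dot3 (f z) (sphOmega z) • sphOmega z

/-- The generic element of `T_ωZ` with parameters `s, t, α`. -/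
def tanZ (k : ℝ) (s t α : V3) (z : R2) : V3 :=
  s - dot3 s (sphOmega z) • sphOmega z + cross3 t (sphOmega z)
    + dot3 α (k • sphOmega z + e3) • sphOmega z

end

/-!
Differentiating `φ·ω = 0` gives `∂φ·ω = −φ·∂ω`. Since `ω` is conformal, `ω, ∂ₓω/μ, ∂_yω/μ` is
an orthonormal frame with `∂ₓω∧∂_yω = −μ²ω`. Expanding `∂ₓφ` and `∂_yφ` in this frame, their
tangential parts contribute only along `ω`, while their normal parts `−φ·∂ₓω` and `−φ·∂_yω`
reassemble, crossed with the frame, into `−μ²φ`.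
-/

open Matrix

theorem dot3_eq_dotProduct (a b : V3) : dot3 a b = a ⬝ᵥ b := by
  simp [dot3, dotProduct, Fin.sum_univ_three]

theorem cross3_eq_crossProduct (a b : V3) : cross3 a b = a ⨯₃ b := by
  rw [cross3, cross_apply]

/-- `(n, a/c, b/c)` is an orthonormal frame with `(a/c) ⨯₃ (b/c) = -n`; `expansion` is the
Parseval identity scaled by `c²`, so that no division is needed. -/
structure IsConformalFrame {K : Type*} [Field K] (c : K) (n a b : Fin 3 → K) : Prop where
  expansion : ∀ v, c ^ 2 • v = (c ^ 2 * (v ⬝ᵥ n)) • n + (v ⬝ᵥ a) • a + (v ⬝ᵥ b) • b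
  fst_cross_snd : a ⨯₃ b = -c ^ 2 • n
  normal_cross_fst : n ⨯₃ a = -b
  normal_cross_snd : n ⨯₃ b = a

theorem IsConformalFrame.cross_add_cross_eq {K : Type*} [Field K] {c : K}
    {n a b p px py : Fin 3 → K} (hframe : IsConformalFrame c n a b) (hc : c ≠ 0)
    (hp : p ⬝ᵥ n = 0) (hpx : px ⬝ᵥ n = -(p ⬝ᵥ a)) (hpy : py ⬝ᵥ n = -(p ⬝ᵥ b)) :
    px ⨯₃ b + a ⨯₃ py = -c ^ 2 • p - (px ⬝ᵥ a + py ⬝ᵥ b) • n := by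
  have han : a ⨯₃ n = b := by rw [← cross_anticomm, hframe.normal_cross_fst, neg_neg]
  have hexp_p := hp ▸ hframe.expansion p
  have hexp_x := hpx ▸ congrArg (· ⨯₃ b) (hframe.expansion px)
  have hexp_y := hpy ▸ congrArg (a ⨯₃ ·) (hframe.expansion py)
  simp only [map_add, map_smul, LinearMap.add_apply, LinearMap.smul_apply, cross_self,
    hframe.fst_cross_snd, hframe.normal_cross_snd, han, smul_zero, add_zero] at hexp_x hexp_y
  apply smul_right_injective _ (pow_ne_zero 2 hc)
  linear_combination (norm := module) hexp_x + hexp_y + c ^ 2 • hexp_p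

section Partials

variable {E : Type*} [NormedAddCommGroup E] [NormedSpace ℝ E]

theorem pdx_eq_deriv {f : R2 → E} {z : R2} (hf : DifferentiableAt ℝ f z) :
    pdx f z = deriv (fun t => f (t, z.2)) z.1 :=
  (hf.hasFDerivAt.comp_hasDerivAt z.1
    ((hasDerivAt_id z.1).prodMk (hasDerivAt_const z.1 z.2))).deriv.symm

theorem pdy_eq_deriv {f : R2 → E} {z : R2} (hf : DifferentiableAt ℝ f z) :
    pdy f z = deriv (fun t => f (z.1, t)) z.2 :=
  (hf.hasFDerivAt.comp_hasDerivAt z.2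
    ((hasDerivAt_const z.2 z.1).prodMk (hasDerivAt_id z.2))).deriv.symm

theorem dot3_fderiv_add_of_dot3_eq_zero {f g : E → V3} {z : E} (hf : DifferentiableAt ℝ f z)
    (hg : DifferentiableAt ℝ g z) (h : ∀ w, dot3 (f w) (g w) = 0) (v : E) :
    dot3 (fderiv ℝ f z v) (g z) + dot3 (f z) (fderiv ℝ g z v) = 0 := by
  have hfi (i : Fin 3) := (hasFDerivAt_apply i (f z)).comp z hf.hasFDerivAt
  have hgi (i : Fin 3) := (hasFDerivAt_apply i (g z)).comp z hg.hasFDerivAt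
  have hdot : HasFDerivAt (fun w => dot3 (f w) (g w)) _ z :=
    (((hfi 0).mul (hgi 0)).add ((hfi 1).mul (hgi 1))).add ((hfi 2).mul (hgi 2))
  have hzero : fderiv ℝ (fun w => dot3 (f w) (g w)) z v = 0 := by simp [h]
  rw [hdot.fderiv] at hzero
  simp only [dot3, _root_.add_apply, _root_.smul_apply,
    ContinuousLinearMap.comp_apply, ContinuousLinearMap.proj_apply, Function.comp_apply,
    smul_eq_mul] at hzero ⊢
  linarith

end Partials

theorem one_add_sq_add_sq_pos (x y : ℝ) : 0 < 1 + x ^ 2 + y ^ 2 := by positivity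

theorem mu_pos (z : R2) : 0 < mu z := div_pos two_pos (one_add_sq_add_sq_pos z.1 z.2)

theorem differentiable_mu : Differentiable ℝ mu := by
  unfold mu
  simp only [div_eq_mul_inv]
  fun_prop (disch := exact fun x => (one_add_sq_add_sq_pos x.1 x.2).ne')

theorem differentiable_sphOmega : Differentiable ℝ sphOmega := by
  refine differentiable_pi.2 fun i => ?_
  fin_cases i
  · exact differentiable_mu.mul differentiable_fst
  · exact differentiable_mu.mul differentiable_snd
  · exact (differentiable_const 1).sub differentiable_mu

theorem hasDerivAt_mu_fst (x y : ℝ) :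
    HasDerivAt (fun t => mu (t, y)) (-(x * mu (x, y) ^ 2)) x := by
  have hD : HasDerivAt (fun t => 1 + t ^ 2 + y ^ 2) (2 * x) x := by
    simpa using ((hasDerivAt_pow 2 x).const_add 1).add_const (y ^ 2)
  refine ((hasDerivAt_const x (2 : ℝ)).fun_div hD (one_add_sq_add_sq_pos x y).ne').congr_deriv ?_
  simp only [mu]
  field_simp
  ring

theorem hasDerivAt_mu_snd (x y : ℝ) :
    HasDerivAt (fun t => mu (x, t)) (-(y * mu (x, y) ^ 2)) y := by
  have hD : HasDerivAt (fun t => 1 + x ^ 2 + t ^ 2) (2 * y) y := by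
    simpa using (hasDerivAt_pow 2 y).const_add (1 + x ^ 2)
  refine ((hasDerivAt_const y (2 : ℝ)).fun_div hD (one_add_sq_add_sq_pos x y).ne').congr_deriv ?_
  simp only [mu]
  field_simp
  ring

theorem pdx_sphOmega (z : R2) :
    pdx sphOmega z = ![mu z - z.1 ^ 2 * mu z ^ 2, -(z.1 * z.2 * mu z ^ 2), z.1 * mu z ^ 2] := by
  obtain ⟨x, y⟩ := z
  rw [pdx_eq_deriv (differentiable_sphOmega _)]
  refine (hasDerivAt_pi.2 fun i => ?_).deriv
  have hmu := hasDerivAt_mu_fst x y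
  fin_cases i
  · show HasDerivAt (fun t => mu (t, y) * t) (mu (x, y) - x ^ 2 * mu (x, y) ^ 2) x
    exact (hmu.fun_mul (hasDerivAt_id' x)).congr_deriv (by ring)
  · show HasDerivAt (fun t => mu (t, y) * y) (-(x * y * mu (x, y) ^ 2)) x
    exact (hmu.mul_const y).congr_deriv (by ring)
  · show HasDerivAt (fun t => 1 - mu (t, y)) (x * mu (x, y) ^ 2) x
    exact (hmu.const_sub 1).congr_deriv (neg_neg _)

theorem pdy_sphOmega (z : R2) :
    pdy sphOmega z = ![-(z.1 * z.2 * mu z ^ 2), mu z - z.2 ^ 2 * mu z ^ 2, z.2 * mu z ^ 2] := by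
  obtain ⟨x, y⟩ := z
  rw [pdy_eq_deriv (differentiable_sphOmega _)]
  refine (hasDerivAt_pi.2 fun i => ?_).deriv
  have hmu := hasDerivAt_mu_snd x y
  fin_cases i
  · show HasDerivAt (fun t => mu (x, t) * x) (-(x * y * mu (x, y) ^ 2)) y
    exact (hmu.mul_const x).congr_deriv (by ring)
  · show HasDerivAt (fun t => mu (x, t) * t) (mu (x, y) - y ^ 2 * mu (x, y) ^ 2) y
    exact (hmu.fun_mul (hasDerivAt_id' y)).congr_deriv (by ring)
  · show HasDerivAt (fun t => 1 - mu (x, t)) (y * mu (x, y) ^ 2) y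
    exact (hmu.const_sub 1).congr_deriv (neg_neg _)

theorem isConformalFrame_sphOmega (z : R2) :
    IsConformalFrame (mu z) (sphOmega z) (pdx sphOmega z) (pdy sphOmega z) := by
  obtain ⟨x, y⟩ := z
  have hD := (one_add_sq_add_sq_pos x y).ne'
  rw [pdx_sphOmega, pdy_sphOmega]
  refine ⟨fun v => ?_, ?_, ?_, ?_⟩ <;> ext i <;> fin_cases i <;>
    simp only [Fin.isValue, Fin.zero_eta, Fin.mk_one, Fin.reduceFinMk, sphOmega, mu, cross_apply,
      dotProduct, Fin.sum_univ_three, cons_val_zero, cons_val_one, cons_val, smul_cons, smul_empty,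
      add_cons, head_cons, tail_cons, empty_add_empty, Pi.add_apply, Pi.smul_apply, Pi.neg_apply,
      smul_eq_mul] <;> field_simp <;> ring

/-- If `φ ∈ C¹(ℝ²,ℝ³)` is pointwise orthogonal to `ω`, then
`∂ₓφ∧∂_yω + ∂ₓω∧∂_yφ = −μ²φ − (∂ₓφ·∂ₓω + ∂_yφ·∂_yω)ω` at every point of `ℝ²`. -/
theorem statement5 (φ : R2 → V3) (hφ : ContDiff ℝ 1 φ)
    (horth : ∀ z : R2, dot3 (φ z) (sphOmega z) = 0) (z : R2) :
    cross3 (pdx φ z) (pdy sphOmega z) + cross3 (pdx sphOmega z) (pdy φ z)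
      = -(mu z ^ 2) • φ z
        - (dot3 (pdx φ z) (pdx sphOmega z) + dot3 (pdy φ z) (pdy sphOmega z)) • sphOmega z := by
  have hφz : DifferentiableAt ℝ φ z := hφ.differentiable one_ne_zero z
  have hx : dot3 (pdx φ z) (sphOmega z) + dot3 (φ z) (pdx sphOmega z) = 0 :=
    dot3_fderiv_add_of_dot3_eq_zero hφz (differentiable_sphOmega z) horth (1, 0)
  have hy : dot3 (pdy φ z) (sphOmega z) + dot3 (φ z) (pdy sphOmega z) = 0 :=
    dot3_fderiv_add_of_dot3_eq_zero hφz (differentiable_sphOmega z) horth (0, 1)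
  simp only [dot3_eq_dotProduct, cross3_eq_crossProduct] at horth hx hy ⊢
  exact (isConformalFrame_sphOmega z).cross_add_cross_eq (mu_pos z).ne' (horth z)
    (eq_neg_of_add_eq_zero_left hx) (eq_neg_of_add_eq_zero_left hy)
end

section
/- Let K be a continuous real-valued function on the upper half-space ℝ³₊ = {p ∈ ℝ³ : p₃>0}, and let u ∈ C²(ℝ̄²,ℝ³) with u₃ > 0 everywhere solve, at every point of ℝ², the system Δu − (2/u₃)·G(∇u) = (2/u₃)·K(u)·∂ₓu∧∂_yu. Then u is conformal: |∂ₓu|² = |∂_yu|² and ∂ₓu·∂_yu = 0 at every point of ℝ². -/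
open MeasureTheory Real Filter Topology

/-- `G(∇u) ∈ ℝ³` with components `G_ℓ(∇u) = ∇u₃·∇u_ℓ − ½|∇u|²δ_{ℓ3}`. -/
noncomputable def Gvec (u : R2 → V3) (z : R2) : V3 := fun l =>
  gdot (fun w => u w 2) (fun w => u w l) z - (1 / 2) * gradNormSq u z * e3 l

/-! The Hopf differential `Φ = u₃⁻² (∂ₓu − i∂_yu)·(∂ₓu − i∂_yu)` of a solution is holomorphic on
`ℂ ≅ ℝ²`: the Cauchy–Riemann equation for `Φ` is a pointwise consequence of the bubble equation.
Regularity of `u` at infinity means `u = v ∘ (ζ ↦ ζ⁻¹)` with `v` of class `C²` and `v₃(0) > 0`; as a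
quadratic differential `Φ` then satisfies `Φ(ζ) = ζ⁻⁴ Φ_v(ζ⁻¹) → 0` at infinity, so `Φ ≡ 0` by
Liouville's theorem, which says exactly that `u` is conformal. -/

noncomputable section

namespace BubbleConformal

open Complex

section Calculus

variable {E : Type*} [NormedAddCommGroup E] [NormedSpace ℝ E] {z : E}

lemma fderiv_component_apply {f : E → V3} (hf : DifferentiableAt ℝ f z) (j : Fin 3) (v : E) :
    fderiv ℝ (fun w => f w j) z v = fderiv ℝ f z v j := by
  rw [fderiv_apply hf j]; rfl

lemma differentiableAt_dot3 {f g : E → V3} (hf : DifferentiableAt ℝ f z)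
    (hg : DifferentiableAt ℝ g z) : DifferentiableAt ℝ (fun w => dot3 (f w) (g w)) z := by
  unfold dot3; fun_prop

lemma fderiv_dot3_apply {f g : E → V3} (hf : DifferentiableAt ℝ f z)
    (hg : DifferentiableAt ℝ g z) (v : E) :
    fderiv ℝ (fun w => dot3 (f w) (g w)) z v
      = dot3 (fderiv ℝ f z v) (g z) + dot3 (f z) (fderiv ℝ g z v) := by
  have hc : ∀ (h : E → V3), DifferentiableAt ℝ h z → ∀ j : Fin 3,
      HasFDerivAt (fun w => h w j) ((ContinuousLinearMap.proj j).comp (fderiv ℝ h z)) z :=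
    fun h hh j => hasFDerivAt_pi'.1 hh.hasFDerivAt j
  have := (((hc f hf 0).fun_mul (hc g hg 0)).fun_add ((hc f hf 1).fun_mul (hc g hg 1))).fun_add
    ((hc f hf 2).fun_mul (hc g hg 2))
  unfold dot3
  rw [this.fderiv]
  simp only [add_apply, smul_apply, ContinuousLinearMap.comp_apply,
    ContinuousLinearMap.proj_apply, smul_eq_mul]
  ring

lemma fderiv_inv_sq_apply {f : E → ℝ} (hf : DifferentiableAt ℝ f z) (hz : f z ≠ 0) (v : E) :
    fderiv ℝ (fun w => (f w ^ 2)⁻¹) z v = -2 * (f z ^ 3)⁻¹ * fderiv ℝ f z v := by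
  have h := ((hasDerivAt_pow 2 (f z)).inv (pow_ne_zero 2 hz)).comp_hasFDerivAt z
    hf.hasFDerivAt
  rw [show (fun w => (f w ^ 2)⁻¹) = (fun x => x ^ 2)⁻¹ ∘ f from rfl, h.fderiv, smul_apply,
    smul_eq_mul]
  field_simp
  ring

lemma differentiableAt_complex_mk {P Q : E → ℝ} (hP : DifferentiableAt ℝ P z)
    (hQ : DifferentiableAt ℝ Q z) : DifferentiableAt ℝ (fun w => (⟨P w, Q w⟩ : ℂ)) z :=
  equivRealProdCLM.symm.differentiableAt.comp z (hP.prodMk hQ)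

lemma fderiv_complex_mk_apply {P Q : E → ℝ} (hP : DifferentiableAt ℝ P z)
    (hQ : DifferentiableAt ℝ Q z) (v : E) :
    fderiv ℝ (fun w => (⟨P w, Q w⟩ : ℂ)) z v = ⟨fderiv ℝ P z v, fderiv ℝ Q z v⟩ := by
  have h := equivRealProdCLM.symm.hasFDerivAt.comp z (hP.hasFDerivAt.prodMk hQ.hasFDerivAt)
  rw [show (fun w => (⟨P w, Q w⟩ : ℂ)) = equivRealProdCLM.symm ∘ fun w => (P w, Q w) from rfl,
    h.fderiv]
  rfl

end Calculus

section SecondDerivatives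

variable {F : Type*} [NormedAddCommGroup F] [NormedSpace ℝ F] {u : R2 → F}

lemma differentiable_fderiv (hu : ContDiff ℝ 2 u) : Differentiable ℝ (fderiv ℝ u) :=
  (hu.fderiv_right (m := 1) (by norm_num)).differentiable one_ne_zero

lemma fderiv_fderiv_apply (hu : ContDiff ℝ 2 u) (z q v : R2) :
    fderiv ℝ (fun w => fderiv ℝ u w q) z v = fderiv ℝ (fderiv ℝ u) z v q := by
  rw [fderiv_clm_apply (differentiable_fderiv hu z) (differentiableAt_const q)]
  simp

lemma differentiable_pdx (hu : ContDiff ℝ 2 u) : Differentiable ℝ (pdx u) := fun z =>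
  (differentiable_fderiv hu z).clm_apply (differentiableAt_const _)

lemma differentiable_pdy (hu : ContDiff ℝ 2 u) : Differentiable ℝ (pdy u) := fun z =>
  (differentiable_fderiv hu z).clm_apply (differentiableAt_const _)

lemma pdy_pdx_eq_pdx_pdy (hu : ContDiff ℝ 2 u) (z : R2) : pdy (pdx u) z = pdx (pdy u) z := by
  change fderiv ℝ (fun w => fderiv ℝ u w (1, 0)) z (0, 1)
    = fderiv ℝ (fun w => fderiv ℝ u w (0, 1)) z (1, 0)
  rw [fderiv_fderiv_apply hu, fderiv_fderiv_apply hu]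
  exact (hu.contDiffAt.isSymmSndFDerivAt (by simp)) _ _

end SecondDerivatives

/-- `w⁻² (a − i b)·(a − i b)`: at `(u₃, ∂ₓu, ∂_yu)` this is the Hopf differential of `u` for the
hyperbolic metric. -/
def hopfForm (w : ℝ) (a b : V3) : ℂ :=
  ⟨(w ^ 2)⁻¹ * (dot3 a a - dot3 b b), -((w ^ 2)⁻¹ * (2 * dot3 a b))⟩

/-- The derivative of `hopfForm` at `(w, a, b)` in the direction `(w', a', b')`. -/
def hopfFormDeriv (w : ℝ) (a b : V3) (w' : ℝ) (a' b' : V3) : ℂ :=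
  ⟨-2 * (w ^ 3)⁻¹ * w' * (dot3 a a - dot3 b b) + (w ^ 2)⁻¹ * (2 * dot3 a' a - 2 * dot3 b' b),
    -(-2 * (w ^ 3)⁻¹ * w' * (2 * dot3 a b) + (w ^ 2)⁻¹ * (2 * (dot3 a' b + dot3 a b')))⟩

def hopf (u : R2 → V3) (z : R2) : ℂ := hopfForm (u z 2) (pdx u z) (pdy u z)

lemma hopfForm_eq_zero_iff {w : ℝ} (hw : w ≠ 0) (a b : V3) :
    hopfForm w a b = 0 ↔ dot3 a a = dot3 b b ∧ dot3 a b = 0 := by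
  have hw2 : (w ^ 2)⁻¹ ≠ 0 := inv_ne_zero (pow_ne_zero 2 hw)
  simp [hopfForm, Complex.ext_iff, hw2, sub_eq_zero]

lemma hopfForm_rotate (w : ℝ) (a b : V3) (c : ℂ) :
    hopfForm w (c.re • a + c.im • b) ((-c.im) • a + c.re • b) = c ^ 2 * hopfForm w a b := by
  apply Complex.ext <;>
  · simp only [hopfForm, dot3, pow_two, Complex.mul_re, Complex.mul_im, Pi.add_apply,
      Pi.smul_apply, smul_eq_mul]
    ring

/-- With `a = ∂ₓu`, `b = ∂_yu`, `w = u₃`: since `(∂ₓ + i∂_y)(a − i b) = Δu`, applying `∂ₓ + i∂_y`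
to the Hopf form gives `2w⁻²((a − i b)·Δu − w⁻¹(a₃ + i b₃)(a − i b)·(a − i b))`, and the bubble
equation makes the bracket vanish; the `K` term drops out because `(a − i b)·(a ∧ b) = 0`. -/
lemma hopfFormDeriv_cauchyRiemann {w k : ℝ} {a b axx axy ayy : V3}
    (hpde : axx + ayy - (2 / w) • (a 2 • a + b 2 • b - ((dot3 a a + dot3 b b) / 2) • e3)
      = (2 * k / w) • cross3 a b) :
    hopfFormDeriv w a b (b 2) axy ayy = I * hopfFormDeriv w a b (a 2) axx axy := by
  have h0 := congrFun hpde 0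
  have h1 := congrFun hpde 1
  have h2 := congrFun hpde 2
  simp only [e3, cross3, dot3, Pi.add_apply, Pi.sub_apply, Pi.smul_apply, smul_eq_mul,
    Matrix.cons_val_zero, Matrix.cons_val_one, Matrix.cons_val_two, Matrix.head_cons,
    Matrix.tail_cons] at h0 h1 h2
  apply Complex.ext
  · simp only [hopfFormDeriv, dot3, Complex.mul_re, Complex.I_re, Complex.I_im]
    linear_combination (-2 * (w ^ 2)⁻¹ * b 0) * h0 + (-2 * (w ^ 2)⁻¹ * b 1) * h1
      + (-2 * (w ^ 2)⁻¹ * b 2) * h2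
  · simp only [hopfFormDeriv, dot3, Complex.mul_im, Complex.I_re, Complex.I_im]
    linear_combination (-2 * (w ^ 2)⁻¹ * a 0) * h0 + (-2 * (w ^ 2)⁻¹ * a 1) * h1
      + (-2 * (w ^ 2)⁻¹ * a 2) * h2

section HopfDifferential

variable {u : R2 → V3} {z : R2}

lemma differentiableAt_hopf (hu : ContDiff ℝ 2 u) (hz : u z 2 ≠ 0) :
    DifferentiableAt ℝ (hopf u) z := by
  have hu3 : DifferentiableAt ℝ (fun w => u w 2) z :=
    differentiableAt_pi.1 (hu.differentiable two_ne_zero z) 2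
  have hW : DifferentiableAt ℝ (fun w => (u w 2 ^ 2)⁻¹) z :=
    (hu3.pow 2).inv (pow_ne_zero 2 hz)
  have ha := differentiable_pdx hu z
  have hb := differentiable_pdy hu z
  exact differentiableAt_complex_mk
    (hW.mul ((differentiableAt_dot3 ha ha).sub (differentiableAt_dot3 hb hb)))
    ((hW.mul ((differentiableAt_dot3 ha hb).const_mul 2)).neg)

lemma fderiv_hopf_apply (hu : ContDiff ℝ 2 u) (hz : u z 2 ≠ 0) (v : R2) :
    fderiv ℝ (hopf u) z v = hopfFormDeriv (u z 2) (pdx u z) (pdy u z)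
      (fderiv ℝ u z v 2) (fderiv ℝ (pdx u) z v) (fderiv ℝ (pdy u) z v) := by
  have hu' := hu.differentiable two_ne_zero z
  have hu3 : DifferentiableAt ℝ (fun w => u w 2) z := differentiableAt_pi.1 hu' 2
  have hW : DifferentiableAt ℝ (fun w => (u w 2 ^ 2)⁻¹) z := (hu3.pow 2).inv (pow_ne_zero 2 hz)
  have ha := differentiable_pdx hu z
  have hb := differentiable_pdy hu z
  have hdiff := (differentiableAt_dot3 ha ha).fun_sub (differentiableAt_dot3 hb hb)
  have hprod := (differentiableAt_dot3 ha hb).const_mul (2 : ℝ)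
  change fderiv ℝ (fun w => (⟨(u w 2 ^ 2)⁻¹
    * (dot3 (pdx u w) (pdx u w) - dot3 (pdy u w) (pdy u w)),
    -((u w 2 ^ 2)⁻¹ * (2 * dot3 (pdx u w) (pdy u w)))⟩ : ℂ)) z v = _
  rw [fderiv_complex_mk_apply (hW.fun_mul hdiff) (hW.fun_mul hprod).fun_neg, fderiv_fun_neg,
    fderiv_fun_mul hW hdiff, fderiv_fun_mul hW hprod,
    fderiv_fun_sub (differentiableAt_dot3 ha ha) (differentiableAt_dot3 hb hb),
    fderiv_const_mul (differentiableAt_dot3 ha hb)]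
  simp only [neg_apply, add_apply, smul_apply, sub_apply, smul_eq_mul,
    fderiv_dot3_apply ha ha, fderiv_dot3_apply hb hb, fderiv_dot3_apply ha hb,
    fderiv_inv_sq_apply hu3 hz, fderiv_component_apply hu']
  apply Complex.ext <;>
  · simp only [hopfFormDeriv, dot3]
    ring

lemma Gvec_eq (hu : DifferentiableAt ℝ u z) :
    Gvec u z = pdx u z 2 • pdx u z + pdy u z 2 • pdy u z
      - ((dot3 (pdx u z) (pdx u z) + dot3 (pdy u z) (pdy u z)) / 2) • e3 := by
  funext l
  simp only [Gvec, gdot, gradNormSq, pdx, pdy, fderiv_component_apply hu, dot3,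
    Fin.sum_univ_three, Pi.add_apply, Pi.sub_apply, Pi.smul_apply, smul_eq_mul]
  ring

lemma pdy_hopf_eq_I_mul_pdx_hopf (hu : ContDiff ℝ 2 u) (hz : u z 2 ≠ 0) {k : ℝ}
    (hpde : lapv u z - (2 / u z 2) • Gvec u z = (2 * k / u z 2) • cross3 (pdx u z) (pdy u z)) :
    pdy (hopf u) z = I * pdx (hopf u) z := by
  rw [Gvec_eq (hu.differentiable two_ne_zero z)] at hpde
  change fderiv ℝ (hopf u) z (0, 1) = I * fderiv ℝ (hopf u) z (1, 0)
  rw [fderiv_hopf_apply hu hz, fderiv_hopf_apply hu hz]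
  change hopfFormDeriv _ _ _ (pdy u z 2) (pdy (pdx u) z) (pdy (pdy u) z)
    = I * hopfFormDeriv _ _ _ (pdx u z 2) (pdx (pdx u) z) (pdx (pdy u) z)
  rw [pdy_pdx_eq_pdx_pdy hu]
  exact hopfFormDeriv_cauchyRiemann hpde

end HopfDifferential

section ComplexCoordinates

variable {E : Type*} [NormedAddCommGroup E] [NormedSpace ℝ E]

lemma fderiv_comp_equivRealProdCLM_one (f : R2 → E) (ζ : ℂ) :
    fderiv ℝ (f ∘ equivRealProdCLM) ζ 1 = pdx f (equivRealProdCLM ζ) := by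
  rw [equivRealProdCLM.comp_right_fderiv]
  simp [pdx]

lemma fderiv_comp_equivRealProdCLM_I (f : R2 → E) (ζ : ℂ) :
    fderiv ℝ (f ∘ equivRealProdCLM) ζ I = pdy f (equivRealProdCLM ζ) := by
  rw [equivRealProdCLM.comp_right_fderiv]
  simp [pdy]

lemma differentiableAt_comp_equivRealProdCLM {F : Type*} [NormedAddCommGroup F]
    [NormedSpace ℂ F] {f : R2 → F} {ζ : ℂ}
    (hf : DifferentiableAt ℝ f (equivRealProdCLM ζ))
    (hcr : pdy f (equivRealProdCLM ζ) = I • pdx f (equivRealProdCLM ζ)) :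
    DifferentiableAt ℂ (f ∘ equivRealProdCLM) ζ := by
  rw [differentiableAt_complex_iff_differentiableAt_real, fderiv_comp_equivRealProdCLM_one,
    fderiv_comp_equivRealProdCLM_I]
  exact ⟨hf.comp ζ equivRealProdCLM.differentiableAt, hcr⟩

lemma invz_equivRealProdCLM (ζ : ℂ) : invz (equivRealProdCLM ζ) = equivRealProdCLM ζ⁻¹ := by
  simp [invz, Complex.inv_re, Complex.inv_im, Complex.normSq_apply, div_eq_mul_inv, pow_two]

lemma realCLM_apply_eq_re_smul_add_im_smul (D : ℂ →L[ℝ] E) (c : ℂ) :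
    D c = c.re • D 1 + c.im • D I := by
  have hc : c.re • (1 : ℂ) + c.im • I = c := by simp
  rw [← map_smul, ← map_smul, ← map_add, hc]

/-- In complex coordinates `invz` is `ζ ↦ ζ⁻¹`, with derivative `c = -ζ⁻²`, and the Hopf
differential is a quadratic differential, so it picks up the factor `c² = ζ⁻⁴`. -/
lemma hopf_of_eq_comp_invz {u v : R2 → V3} (hv : Differentiable ℝ v)
    (hvu : ∀ z : R2, z ≠ 0 → v z = u (invz z)) {ζ : ℂ} (hζ : ζ ≠ 0) :
    hopf u (equivRealProdCLM ζ) = ζ⁻¹ ^ 4 * hopf v (equivRealProdCLM ζ⁻¹) := by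
  have hinv : ∀ ξ : ℂ, ξ ≠ 0 →
      (u ∘ equivRealProdCLM) ξ = ((v ∘ equivRealProdCLM) ∘ Inv.inv) ξ := by
    intro ξ hξ
    have hξ' : equivRealProdCLM ξ⁻¹ ≠ 0 := by
      rw [Ne, ContinuousLinearEquiv.map_eq_zero_iff]
      exact inv_ne_zero hξ
    simp only [Function.comp_apply, hvu _ hξ', invz_equivRealProdCLM, inv_inv]
  have hev : u ∘ equivRealProdCLM =ᶠ[𝓝 ζ] (v ∘ equivRealProdCLM) ∘ Inv.inv :=
    (eventually_ne_nhds hζ).mono hinv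
  set c : ℂ := -(ζ ^ 2)⁻¹
  have hchain := ((hv _).comp _ equivRealProdCLM.differentiableAt).hasFDerivAt.comp ζ
    ((hasDerivAt_inv hζ).hasFDerivAt.restrictScalars ℝ)
  have key : ∀ h : ℂ, fderiv ℝ (u ∘ equivRealProdCLM) ζ h
      = fderiv ℝ (v ∘ equivRealProdCLM) ζ⁻¹ (h * c) := by
    intro h
    rw [hev.fderiv_eq, hchain.fderiv]
    simp [c]
  have hu3 : u (equivRealProdCLM ζ) 2 = v (equivRealProdCLM ζ⁻¹) 2 := congrFun (hinv ζ hζ) 2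
  have hc2 : c ^ 2 = ζ⁻¹ ^ 4 := by simp only [c]; ring
  simp only [hopf]
  rw [← fderiv_comp_equivRealProdCLM_one u, ← fderiv_comp_equivRealProdCLM_I u, key, key,
    ← fderiv_comp_equivRealProdCLM_one v, ← fderiv_comp_equivRealProdCLM_I v,
    realCLM_apply_eq_re_smul_add_im_smul _ (1 * c),
    realCLM_apply_eq_re_smul_add_im_smul _ (I * c), hu3, ← hc2, ← hopfForm_rotate]
  simp

end ComplexCoordinates

lemma differentiable_hopf_comp_equivRealProdCLM {u : R2 → V3} (hu : ContDiff ℝ 2 u)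
    (hu3 : ∀ z, u z 2 ≠ 0) (k : R2 → ℝ)
    (hpde : ∀ z, lapv u z - (2 / u z 2) • Gvec u z
      = (2 * k z / u z 2) • cross3 (pdx u z) (pdy u z)) :
    Differentiable ℂ (hopf u ∘ equivRealProdCLM) := fun _ =>
  differentiableAt_comp_equivRealProdCLM (differentiableAt_hopf hu (hu3 _))
    (pdy_hopf_eq_I_mul_pdx_hopf hu (hu3 _) (hpde _))

lemma tendsto_hopf_comp_equivRealProdCLM_cocompact {u v : R2 → V3} (hv : ContDiff ℝ 2 v)
    (hvu : ∀ z : R2, z ≠ 0 → v z = u (invz z)) (hv0 : v 0 2 ≠ 0) :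
    Tendsto (hopf u ∘ equivRealProdCLM) (cocompact ℂ) (𝓝 0) := by
  have hcont : ContinuousAt (hopf v) (equivRealProdCLM 0) := by
    rw [map_zero]
    exact (differentiableAt_hopf hv hv0).continuousAt
  have hlim : Tendsto (fun ζ : ℂ => ζ⁻¹ ^ 4 * hopf v (equivRealProdCLM ζ⁻¹))
      (cocompact ℂ) (𝓝 0) := by
    rw [← Metric.cobounded_eq_cocompact]
    have h0 := tendsto_inv₀_cobounded (α := ℂ)
    simpa using (h0.pow 4).mul
      (hcont.tendsto.comp ((equivRealProdCLM.continuous.tendsto 0).comp h0))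
  refine hlim.congr' ?_
  filter_upwards [(isCompact_singleton : IsCompact {(0 : ℂ)}).compl_mem_cocompact] with ζ hζ
  exact (hopf_of_eq_comp_invz (hv.differentiable two_ne_zero) hvu hζ).symm

end BubbleConformal

end

open BubbleConformal

theorem statement13_general (K : V3 → ℝ)
    (u : R2 → V3) (hu : ContDiff ℝ 2 u) (hupos : ∀ z : R2, 0 < u z 2)
    (hext : ∃ v : R2 → V3, ContDiff ℝ 2 v ∧ (∀ z : R2, z ≠ 0 → v z = u (invz z)) ∧
      0 < v 0 2)
    (hpde : ∀ z : R2,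
      lapv u z - (2 / u z 2) • Gvec u z
        = (2 * K (u z) / u z 2) • cross3 (pdx u z) (pdy u z)) :
    ∀ z : R2, dot3 (pdx u z) (pdx u z) = dot3 (pdy u z) (pdy u z) ∧
      dot3 (pdx u z) (pdy u z) = 0 := by
  obtain ⟨v, hv, hvu, hv0⟩ := hext
  have hentire := differentiable_hopf_comp_equivRealProdCLM hu (fun z => (hupos z).ne') _ hpde
  have hzero : ∀ ζ : ℂ, hopf u (Complex.equivRealProdCLM ζ) = 0 := fun ζ =>
    hentire.apply_eq_of_tendsto_cocompact ζ
      (tendsto_hopf_comp_equivRealProdCLM_cocompact hv hvu hv0.ne')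
  intro z
  rw [← hopfForm_eq_zero_iff (hupos z).ne']
  simpa [hopf] using hzero (Complex.equivRealProdCLM.symm z)

/-- A `C²(ℝ̄²,ℍ³)` solution of the `K`-bubble system
`Δu − (2/u₃)G(∇u) = (2/u₃)K(u) ∂ₓu∧∂_yu` is conformal. -/
theorem statement13 (K : V3 → ℝ) (hK : ContinuousOn K {p : V3 | 0 < p 2})
    (u : R2 → V3) (hu : ContDiff ℝ 2 u) (hupos : ∀ z : R2, 0 < u z 2)
    (hext : ∃ v : R2 → V3, ContDiff ℝ 2 v ∧ (∀ z : R2, z ≠ 0 → v z = u (invz z)) ∧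
      0 < v 0 2)
    (hpde : ∀ z : R2,
      lapv u z - (2 / u z 2) • Gvec u z
        = (2 * K (u z) / u z 2) • cross3 (pdx u z) (pdy u z)) :
    ∀ z : R2, dot3 (pdx u z) (pdx u z) = dot3 (pdy u z) (pdy u z) ∧
      dot3 (pdx u z) (pdy u z) = 0 :=
  statement13_general K u hu hupos hext hpde
end
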